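/- arXiv:1102.4656 — 2 statements merged into one kernel-verified Lean document; each statement's English description precedes it below -/
import Mathlib

section
/- Let ℓ be a prime, e = 0 if ℓ is odd and e = 1 if ℓ = 2, and n ≥ 1 (n ≥ 2 if ℓ = 2). Let G be a closed subgroup of GL₂(ℤ_ℓ) whose image mod ℓ^{n+1+e} contains every A ∈ SL₂(ℤ/ℓ^{n+1+e}ℤ) with A ≡ I mod ℓⁿ. Then the closure of the commutator subgroup [G,G] contains {A ∈ SL₂(ℤ_ℓ) : A ≡ I mod ℓ^{2n+e}}. -/
open Matrix
open scoped commutatorElement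

/-- Reduction `GL₂(ℤ_ℓ) → GL₂(ℤ/ℓᵐℤ)`. -/
noncomputable def redGL (ℓ : ℕ) [Fact (Nat.Prime ℓ)] (m : ℕ) :
    GL (Fin 2) ℤ_[ℓ] →* GL (Fin 2) (ZMod (ℓ ^ m)) :=
  Units.map ((PadicInt.toZModPow m).mapMatrix).toMonoidHom



section CommRingStuff
variable {S : Type*} [CommRing S]

def eE12 : Matrix (Fin 2) (Fin 2) S := !![0,1;0,0]
def eE21 : Matrix (Fin 2) (Fin 2) S := !![0,0;1,0]
def eH : Matrix (Fin 2) (Fin 2) S := !![1,0;0,-1]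

lemma eE12_sq : (eE12 : Matrix (Fin 2) (Fin 2) S) * eE12 = 0 := by
  ext i j; fin_cases i <;> fin_cases j <;> simp [eE12, Matrix.mul_fin_two]
lemma eE21_sq : (eE21 : Matrix (Fin 2) (Fin 2) S) * eE21 = 0 := by
  ext i j; fin_cases i <;> fin_cases j <;> simp [eE21, Matrix.mul_fin_two]
lemma eH_sq : (eH : Matrix (Fin 2) (Fin 2) S) * eH = 1 := by
  ext i j; fin_cases i <;> fin_cases j <;> simp [eH, Matrix.mul_fin_two, Matrix.one_apply]
lemma bracket_h_e12 : (eH : Matrix (Fin 2) (Fin 2) S) * eE12 - eE12 * eH = (2:S) • eE12 := by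
  ext i j; fin_cases i <;> fin_cases j <;> (simp [eH, eE12, Matrix.mul_fin_two]; try ring)
lemma bracket_h_e21 : (eH : Matrix (Fin 2) (Fin 2) S) * eE21 - eE21 * eH = (-2:S) • eE21 := by
  ext i j; fin_cases i <;> fin_cases j <;> (simp [eH, eE21, Matrix.mul_fin_two]; try ring)
lemma bracket_e12_e21 : (eE12 : Matrix (Fin 2) (Fin 2) S) * eE21 - eE21 * eE12 = eH := by
  ext i j; fin_cases i <;> fin_cases j <;> simp [eH, eE12, eE21, Matrix.mul_fin_two]

lemma det_one_add_smul (c : S) (B : Matrix (Fin 2) (Fin 2) S) :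
    ((1 : Matrix (Fin 2) (Fin 2) S) + c • B).det
      = 1 + c * (B 0 0 + B 1 1) + c^2 * (B 0 0 * B 1 1 - B 0 1 * B 1 0) := by
  rw [Matrix.det_fin_two]
  simp [Matrix.add_apply, Matrix.smul_apply, Matrix.one_apply]
  ring

lemma unit_mul_inv (c : S) (hc : c^2 = 0) (B : Matrix (Fin 2) (Fin 2) S) (b : S)
    (hB : B * B = b • 1) :
    ((1 : Matrix (Fin 2) (Fin 2) S) + c • B) * (1 - c • B) = 1 := by
  have h1 : ((1 : Matrix (Fin 2) (Fin 2) S) + c • B) * (1 - c • B) = 1 - (c*c) • (B * B) := by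
    rw [mul_sub, add_mul, add_mul, mul_one, mul_one, one_mul, smul_mul_smul_comm]
    abel
  rw [h1, hB, smul_smul, ← pow_two, hc]; simp

lemma unit_inv_mul (c : S) (hc : c^2 = 0) (B : Matrix (Fin 2) (Fin 2) S) (b : S)
    (hB : B * B = b • 1) :
    ((1 : Matrix (Fin 2) (Fin 2) S) - c • B) * (1 + c • B) = 1 := by
  have h1 : ((1 : Matrix (Fin 2) (Fin 2) S) - c • B) * (1 + c • B) = 1 - (c*c) • (B * B) := by
    rw [sub_mul, mul_add, mul_add, mul_one, mul_one, one_mul, smul_mul_smul_comm]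
    abel
  rw [h1, hB, smul_smul, ← pow_two, hc]; simp

end CommRingStuff


variable {ℓ : ℕ} [Fact (Nat.Prime ℓ)]

local notation "M2" => Matrix (Fin 2) (Fin 2) ℤ_[ℓ]

lemma extractM {c : ℤ_[ℓ]} {A B : M2} (h : ∀ i j, c ∣ (A - B) i j) :
    ∃ Θ : M2, A = B + c • Θ := by
  refine ⟨Matrix.of (fun i j => (h i j).choose), ?_⟩
  ext i j
  have hs := (h i j).choose_spec
  simp only [Matrix.sub_apply] at hs
  simp only [Matrix.add_apply, Matrix.smul_apply, Matrix.of_apply, smul_eq_mul]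
  exact eq_add_of_sub_eq' ((h i j).choose_spec)

lemma one_add_pow {A : Type*} [Ring A] (X : A) (r : ℕ) :
    ∃ P : A, (1 + X)^r = 1 + r • X + X*X*P := by
  induction r with
  | zero => exact ⟨0, by simp⟩
  | succ r ih =>
    obtain ⟨P, hP⟩ := ih
    refine ⟨r • 1 + P + P * X, ?_⟩
    rw [pow_succ, hP]
    simp only [mul_add, add_mul, one_mul, mul_one, succ_nsmul, smul_mul_assoc, mul_smul_comm]
    noncomm_ring

lemma pow_step (e s : ℕ) (hs : 1 ≤ s) (B Θ : M2) (hB2 : B * B = 0)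
    (g : GL (Fin 2) ℤ_[ℓ])
    (hg : (g : M2) = 1 + ((ℓ:ℤ_[ℓ])^s) • (B + ((ℓ:ℤ_[ℓ])^(1+e)) • Θ)) :
    ∃ Θ' : M2, ((g^ℓ : GL (Fin 2) ℤ_[ℓ]) : M2)
      = 1 + ((ℓ:ℤ_[ℓ])^(s+1)) • (B + ((ℓ:ℤ_[ℓ])^(1+e)) • Θ') := by
  set c : ℤ_[ℓ] := (ℓ:ℤ_[ℓ])^(1+e) with hc
  set B' : M2 := B + c • Θ with hB'
  obtain ⟨P, hP⟩ := one_add_pow (((ℓ:ℤ_[ℓ])^s) • B') ℓ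
  have hBB' : B' * B' = c • (B * Θ + Θ * B + c • (Θ * Θ)) := by
    rw [hB']
    simp only [mul_add, add_mul, smul_mul_assoc, mul_smul_comm, hB2, smul_add, smul_smul]
    abel
  refine ⟨Θ + ((ℓ:ℤ_[ℓ])^(s-1)) • ((B * Θ + Θ * B + c • (Θ * Θ)) * P), ?_⟩
  have hcoe : ((g^ℓ : GL (Fin 2) ℤ_[ℓ]) : M2) = ((g : M2))^ℓ := Units.val_pow_eq_pow_val g ℓ
  rw [hcoe, hg, hP]
  have h1 : (ℓ : ℕ) • (((ℓ:ℤ_[ℓ])^s) • B') = ((ℓ:ℤ_[ℓ])^(s+1)) • B' := by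
    rw [← Nat.cast_smul_eq_nsmul ℤ_[ℓ], smul_smul, ← pow_succ']
  have hsc : ((ℓ:ℤ_[ℓ])^s * (ℓ:ℤ_[ℓ])^s) * c = (ℓ:ℤ_[ℓ])^(s+1) * (c * (ℓ:ℤ_[ℓ])^(s-1)) := by
    rw [hc, ← pow_add, ← pow_add, ← pow_add, ← pow_add]
    congr 1
    omega
  have h2 : (((ℓ:ℤ_[ℓ])^s) • B') * (((ℓ:ℤ_[ℓ])^s) • B') * P
      = ((ℓ:ℤ_[ℓ])^(s+1)) • (c • (((ℓ:ℤ_[ℓ])^(s-1)) • ((B * Θ + Θ * B + c • (Θ * Θ)) * P))) := by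
    rw [smul_mul_assoc, mul_smul_comm, smul_mul_assoc, smul_mul_assoc, hBB',
      smul_mul_assoc, smul_smul, smul_smul, smul_smul, smul_smul]
    congr 1
    linear_combination hsc
  rw [h1, h2]
  simp only [smul_add, hB']
  abel

lemma units_inv_eq (g : GL (Fin 2) ℤ_[ℓ]) (a : ℕ) (B' : M2)
    (hg : (g : M2) = 1 + ((ℓ:ℤ_[ℓ])^a) • B') :
    ((g⁻¹ : GL (Fin 2) ℤ_[ℓ]) : M2) = 1 - ((ℓ:ℤ_[ℓ])^a) • (B' * ((g⁻¹ : GL (Fin 2) ℤ_[ℓ]) : M2)) := by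
  have h1 : (g : M2) * ((g⁻¹ : GL (Fin 2) ℤ_[ℓ]) : M2) = 1 := by
    rw [← Units.val_mul, mul_inv_cancel, Units.val_one]
  rw [hg] at h1
  rw [add_mul, one_mul, smul_mul_assoc] at h1
  linear_combination (norm := abel) h1

lemma comm_form (e a b : ℕ) (ha : 1 + e ≤ a) (hb : 1 + e ≤ b) (B' C' : M2)
    (g h : GL (Fin 2) ℤ_[ℓ])
    (hg : (g : M2) = 1 + ((ℓ:ℤ_[ℓ])^a) • B') (hh : (h : M2) = 1 + ((ℓ:ℤ_[ℓ])^b) • C') :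
    ∃ E : M2, ((⁅g, h⁆ : GL (Fin 2) ℤ_[ℓ]) : M2)
      = 1 + ((ℓ:ℤ_[ℓ])^(a+b)) • ((B' * C' - C' * B') * (1 + ((ℓ:ℤ_[ℓ])^(1+e)) • E)) := by
  set gi : M2 := ((g⁻¹ : GL (Fin 2) ℤ_[ℓ]) : M2) with hgi
  set hi : M2 := ((h⁻¹ : GL (Fin 2) ℤ_[ℓ]) : M2) with hhi
  set w : M2 := gi * hi with hw
  refine ⟨-(((ℓ:ℤ_[ℓ])^(b-(1+e))) • (C' * hi)) - ((ℓ:ℤ_[ℓ])^(a-(1+e))) • (B' * w), ?_⟩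
  have hginv : gi = 1 - ((ℓ:ℤ_[ℓ])^a) • (B' * gi) := units_inv_eq g a B' hg
  have hhinv : hi = 1 - ((ℓ:ℤ_[ℓ])^b) • (C' * hi) := units_inv_eq h b C' hh
  have e2 : (ℓ:ℤ_[ℓ])^a = (ℓ:ℤ_[ℓ])^(1+e) * (ℓ:ℤ_[ℓ])^(a-(1+e)) := by
    rw [← pow_add]; congr 1; omega
  have e3 : (ℓ:ℤ_[ℓ])^b = (ℓ:ℤ_[ℓ])^(1+e) * (ℓ:ℤ_[ℓ])^(b-(1+e)) := by
    rw [← pow_add]; congr 1; omega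
  have e1 : w = hi - ((ℓ:ℤ_[ℓ])^a) • (B' * w) := by
    rw [hw]
    conv_lhs => rw [hginv]
    rw [sub_mul, one_mul, smul_mul_assoc, mul_assoc]
  have hprod : w = 1 + ((ℓ:ℤ_[ℓ])^(1+e)) •
      (-(((ℓ:ℤ_[ℓ])^(b-(1+e))) • (C' * hi)) - ((ℓ:ℤ_[ℓ])^(a-(1+e))) • (B' * w)) := by
    calc w = hi - ((ℓ:ℤ_[ℓ])^a) • (B' * w) := e1
      _ = (1 - ((ℓ:ℤ_[ℓ])^b) • (C' * hi)) - ((ℓ:ℤ_[ℓ])^a) • (B' * w) := by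
          conv_lhs => rw [hhinv]
      _ = 1 + ((ℓ:ℤ_[ℓ])^(1+e)) •
          (-(((ℓ:ℤ_[ℓ])^(b-(1+e))) • (C' * hi)) - ((ℓ:ℤ_[ℓ])^(a-(1+e))) • (B' * w)) := by
          rw [e2, e3]
          simp only [smul_sub, smul_neg, smul_smul]
          abel
  have hcomm : ((⁅g, h⁆ : GL (Fin 2) ℤ_[ℓ]) : M2)
      = 1 + ((g:M2) * (h:M2) - (h:M2) * (g:M2)) * w := by
    have h1 : ((⁅g, h⁆ : GL (Fin 2) ℤ_[ℓ]) : M2) = (g:M2) * (h:M2) * w := by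
      rw [commutatorElement_def, hw, hgi, hhi]
      simp only [Units.val_mul, mul_assoc]
    have h2 : (h:M2) * (g:M2) * w = 1 := by
      have hgg : (g:M2) * gi = 1 := by
        rw [hgi, ← Units.val_mul, mul_inv_cancel, Units.val_one]
      have hhh : (h:M2) * hi = 1 := by
        rw [hhi, ← Units.val_mul, mul_inv_cancel, Units.val_one]
      calc (h:M2) * (g:M2) * w = (h:M2) * ((g:M2) * gi) * hi := by
            rw [hw, mul_assoc, mul_assoc, mul_assoc]
        _ = 1 := by rw [hgg, mul_one, hhh]
    rw [h1, sub_mul, h2]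
    abel
  have key : ∀ x y : M2, (1+x)*(1+y) - (1+y)*(1+x) = x*y - y*x := by
    intro x y; noncomm_ring
  have hgh : (g:M2) * (h:M2) - (h:M2) * (g:M2) = ((ℓ:ℤ_[ℓ])^(a+b)) • (B' * C' - C' * B') := by
    rw [hg, hh, key, smul_mul_assoc, mul_smul_comm, smul_mul_assoc, mul_smul_comm,
      smul_smul, smul_smul, mul_comm ((ℓ:ℤ_[ℓ])^b), ← smul_sub, ← pow_add]
  rw [hcomm, hgh, smul_mul_assoc]
  conv_lhs => rw [hprod]

lemma pow_iter (e n : ℕ) (hn : 1 ≤ n) (B Θ : M2) (hB2 : B * B = 0)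
    (g : GL (Fin 2) ℤ_[ℓ])
    (hg : (g : M2) = 1 + ((ℓ:ℤ_[ℓ])^n) • (B + ((ℓ:ℤ_[ℓ])^(1+e)) • Θ)) :
    ∀ t : ℕ, ∃ Θ' : M2, ((g^(ℓ^t) : GL (Fin 2) ℤ_[ℓ]) : M2)
      = 1 + ((ℓ:ℤ_[ℓ])^(n+t)) • (B + ((ℓ:ℤ_[ℓ])^(1+e)) • Θ') := by
  intro t
  induction t with
  | zero => exact ⟨Θ, by simpa using hg⟩
  | succ t ih =>
    obtain ⟨Θ', hΘ'⟩ := ih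
    obtain ⟨Θ'', hΘ''⟩ := pow_step e (n+t) (by omega) B Θ' hB2 (g^(ℓ^t)) hΘ'
    refine ⟨Θ'', ?_⟩
    rw [pow_succ, pow_mul]
    exact hΘ''

lemma prod_form (m : ℕ) (u v : GL (Fin 2) ℤ_[ℓ]) (W V : M2)
    (hu : (u : M2) = 1 + ((ℓ:ℤ_[ℓ])^m) • W) (hv : (v : M2) = 1 + ((ℓ:ℤ_[ℓ])^m) • V) :
    ((u*v : GL (Fin 2) ℤ_[ℓ]) : M2) = 1 + ((ℓ:ℤ_[ℓ])^m) • (W + V + ((ℓ:ℤ_[ℓ])^m) • (W*V)) := by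
  have : ((u*v : GL (Fin 2) ℤ_[ℓ]) : M2) = (u : M2) * (v : M2) := Units.val_mul u v
  rw [this, hu, hv]
  simp only [mul_add, add_mul, one_mul, mul_one, smul_mul_assoc, mul_smul_comm, smul_smul,
    smul_add]
  abel

lemma pow_form (m : ℕ) (hm : 1 ≤ m) (u : GL (Fin 2) ℤ_[ℓ]) (W : M2)
    (hu : (u : M2) = 1 + ((ℓ:ℤ_[ℓ])^m) • W) (r : ℕ) :
    ∃ Z : M2, ((u^r : GL (Fin 2) ℤ_[ℓ]) : M2) = 1 + ((ℓ:ℤ_[ℓ])^m) • Z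
      ∧ ∀ i j, (ℓ:ℤ_[ℓ]) ∣ (Z - (r:ℤ_[ℓ]) • W) i j := by
  induction r with
  | zero =>
    refine ⟨0, by simp, ?_⟩
    intro i j; simp
  | succ r ih =>
    obtain ⟨Z, hZ, hdvd⟩ := ih
    refine ⟨Z + W + ((ℓ:ℤ_[ℓ])^m) • (Z*W), ?_, ?_⟩
    · rw [pow_succ]
      exact prod_form m (u^r) u Z W hZ hu
    · intro i j
      have h1 : (Z + W + ((ℓ:ℤ_[ℓ])^m) • (Z*W) - ((r:ℕ)+1:ℤ_[ℓ]) • W) i j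
          = (Z - (r:ℤ_[ℓ]) • W) i j + ((ℓ:ℤ_[ℓ])^m) * (Z*W) i j := by
        simp only [Matrix.add_apply, Matrix.sub_apply, Matrix.smul_apply, smul_eq_mul]
        ring
      push_cast
      rw [h1]
      exact dvd_add (hdvd i j) ((dvd_pow_self (ℓ:ℤ_[ℓ]) (by omega)).mul_right _)

lemma detOneAddSmul {S : Type*} [CommRing S] (c : S) (B : Matrix (Fin 2) (Fin 2) S) :
    ((1 : Matrix (Fin 2) (Fin 2) S) + c • B).det
      = 1 + c * (B 0 0 + B 1 1) + c^2 * (B 0 0 * B 1 1 - B 0 1 * B 1 0) := by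
  rw [Matrix.det_fin_two]
  simp [Matrix.add_apply, Matrix.smul_apply, Matrix.one_apply]
  ring

lemma traceless (m : ℕ) (hm : 1 ≤ m) (X : M2)
    (hdet : ((1 : M2) + ((ℓ:ℤ_[ℓ])^m) • X).det = 1) :
    (ℓ:ℤ_[ℓ]) ∣ (X 0 0 + X 1 1) := by
  have h := detOneAddSmul ((ℓ:ℤ_[ℓ])^m) X
  rw [hdet] at h
  have hc : ((ℓ:ℤ_[ℓ])^m) ≠ 0 := by
    apply pow_ne_zero
    exact_mod_cast Nat.cast_ne_zero.mpr (Fact.out (p := Nat.Prime ℓ)).ne_zero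
  have h2 : ((ℓ:ℤ_[ℓ])^m) * ((X 0 0 + X 1 1) + ((ℓ:ℤ_[ℓ])^m) * (X 0 0 * X 1 1 - X 0 1 * X 1 0)) = 0 := by
    ring_nf
    linear_combination -h
  have h3 := (mul_eq_zero.mp h2).resolve_left hc
  have h4 : X 0 0 + X 1 1 = -(((ℓ:ℤ_[ℓ])^m) * (X 0 0 * X 1 1 - X 0 1 * X 1 0)) := by
    linear_combination h3
  rw [h4]
  exact dvd_neg.mpr ((dvd_pow_self (ℓ:ℤ_[ℓ]) (by omega)).mul_right _)


lemma base_elem (e n : ℕ) (hn : 1 ≤ n) (hne : 1 + e ≤ n)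
    (G : Subgroup (GL (Fin 2) ℤ_[ℓ]))
    (hsurj : ∀ A : GL (Fin 2) (ZMod (ℓ ^ (n + 1 + e))),
      Matrix.det ((A : Matrix (Fin 2) (Fin 2) (ZMod (ℓ ^ (n + 1 + e))))) = 1 →
      (∀ i j : Fin 2, ((ℓ : ZMod (ℓ ^ (n + 1 + e))) ^ n) ∣
          (((A : Matrix (Fin 2) (Fin 2) (ZMod (ℓ ^ (n + 1 + e))))) - 1) i j) →
      ∃ g ∈ G, redGL ℓ (n + 1 + e) g = A)
    (BR : M2) (htr : BR 0 0 + BR 1 1 = 0) (b : ℤ_[ℓ]) (hsq : BR * BR = b • 1) :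
    ∃ g ∈ G, ∃ Θ : M2,
      (g : M2) = 1 + ((ℓ:ℤ_[ℓ])^n) • (BR + ((ℓ:ℤ_[ℓ])^(1+e)) • Θ) := by
  set q : ℕ := n + 1 + e with hq
  set π : ℤ_[ℓ] →+* ZMod (ℓ^q) := PadicInt.toZModPow q with hπ
  set Bq : Matrix (Fin 2) (Fin 2) (ZMod (ℓ^q)) := π.mapMatrix BR with hBq
  set cq : ZMod (ℓ^q) := (ℓ : ZMod (ℓ^q))^n with hcq
  have hc2 : cq^2 = 0 := by
    have h0 : (ℓ : ZMod (ℓ^q))^q = 0 := by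
      have : ((ℓ^q : ℕ) : ZMod (ℓ^q)) = 0 := ZMod.natCast_self _
      rwa [Nat.cast_pow] at this
    have : cq^2 = (ℓ : ZMod (ℓ^q))^q * (ℓ : ZMod (ℓ^q))^(2*n - q) := by
      rw [hcq, ← pow_mul, ← pow_add]
      congr 1
      rw [hq]
      omega
    rw [this, h0, zero_mul]
  have hsqq : Bq * Bq = (π b) • 1 := by
    rw [hBq, ← _root_.map_mul]
    rw [hsq]
    ext i j
    by_cases hij : i = j <;>
      simp [RingHom.mapMatrix_apply, Matrix.map_apply, Matrix.smul_apply, Matrix.one_apply, hij]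
  have hmul : ((1 : Matrix (Fin 2) (Fin 2) (ZMod (ℓ^q))) + cq • Bq) * (1 - cq • Bq) = 1 := by
    have h1 : ((1 : Matrix (Fin 2) (Fin 2) (ZMod (ℓ^q))) + cq • Bq) * (1 - cq • Bq)
        = 1 - (cq*cq) • (Bq * Bq) := by
      rw [mul_sub, add_mul, add_mul, mul_one, mul_one, one_mul, smul_mul_smul_comm]
      abel
    rw [h1, hsqq, smul_smul, ← pow_two, hc2]; simp
  have hmul' : ((1 : Matrix (Fin 2) (Fin 2) (ZMod (ℓ^q))) - cq • Bq) * (1 + cq • Bq) = 1 := by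
    have h1 : ((1 : Matrix (Fin 2) (Fin 2) (ZMod (ℓ^q))) - cq • Bq) * (1 + cq • Bq)
        = 1 - (cq*cq) • (Bq * Bq) := by
      rw [sub_mul, mul_add, mul_add, mul_one, mul_one, one_mul, smul_mul_smul_comm]
      abel
    rw [h1, hsqq, smul_smul, ← pow_two, hc2]; simp
  set Az : GL (Fin 2) (ZMod (ℓ^q)) := ⟨1 + cq • Bq, 1 - cq • Bq, hmul, hmul'⟩ with hAz
  have hdet : Matrix.det ((Az : Matrix (Fin 2) (Fin 2) (ZMod (ℓ^q)))) = 1 := by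
    have : (Az : Matrix (Fin 2) (Fin 2) (ZMod (ℓ^q))) = 1 + cq • Bq := rfl
    rw [this, detOneAddSmul, hc2]
    have htrq : Bq 0 0 + Bq 1 1 = 0 := by
      rw [hBq]
      have : π.mapMatrix BR 0 0 + π.mapMatrix BR 1 1 = π (BR 0 0 + BR 1 1) := by
        simp [RingHom.mapMatrix_apply, Matrix.map_apply]
      rw [this, htr, map_zero]
    rw [htrq]
    ring
  have hdvd : ∀ i j : Fin 2, ((ℓ : ZMod (ℓ^q)) ^ n) ∣
      (((Az : Matrix (Fin 2) (Fin 2) (ZMod (ℓ^q)))) - 1) i j := by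
    intro i j
    have : ((Az : Matrix (Fin 2) (Fin 2) (ZMod (ℓ^q))) - 1) i j = cq * Bq i j := by
      show ((1 + cq • Bq - 1 : Matrix (Fin 2) (Fin 2) (ZMod (ℓ^q)))) i j = _
      simp [Matrix.add_apply, Matrix.sub_apply, Matrix.smul_apply]
    rw [this, hcq]
    exact dvd_mul_right _ _
  obtain ⟨g, hgG, hgred⟩ := hsurj Az hdet hdvd
  refine ⟨g, hgG, ?_⟩
  have hval : π.mapMatrix (g : M2) = 1 + cq • Bq := by
    have := congrArg Units.val hgred
    exact this
  have hval2 : π.mapMatrix ((1 : M2) + ((ℓ:ℤ_[ℓ])^n) • BR) = 1 + cq • Bq := by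
    rw [_root_.map_add, _root_.map_one]
    congr 1
    ext i j
    simp [RingHom.mapMatrix_apply, Matrix.map_apply, Matrix.smul_apply, hcq, hBq]
  have hdvdq : ∀ i j, ((ℓ:ℤ_[ℓ])^q) ∣ ((g : M2) - ((1 : M2) + ((ℓ:ℤ_[ℓ])^n) • BR)) i j := by
    intro i j
    have hker : π (((g : M2) - ((1 : M2) + ((ℓ:ℤ_[ℓ])^n) • BR)) i j) = 0 := by
      have : π.mapMatrix ((g : M2) - ((1 : M2) + ((ℓ:ℤ_[ℓ])^n) • BR)) = 0 := by
        rw [map_sub, hval, hval2, sub_self]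
      calc π (((g : M2) - ((1 : M2) + ((ℓ:ℤ_[ℓ])^n) • BR)) i j)
          = (π.mapMatrix ((g : M2) - ((1 : M2) + ((ℓ:ℤ_[ℓ])^n) • BR))) i j := rfl
        _ = 0 := by rw [this]; rfl
    have hmem : (((g : M2) - ((1 : M2) + ((ℓ:ℤ_[ℓ])^n) • BR)) i j)
        ∈ RingHom.ker (PadicInt.toZModPow (p := ℓ) q) := hker
    rw [PadicInt.ker_toZModPow, Ideal.mem_span_singleton] at hmem
    exact hmem
  obtain ⟨Θ, hΘ⟩ := extractM hdvdq
  refine ⟨Θ, ?_⟩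
  rw [hΘ]
  have : ((ℓ:ℤ_[ℓ])^q) • Θ = ((ℓ:ℤ_[ℓ])^n) • (((ℓ:ℤ_[ℓ])^(1+e)) • Θ) := by
    rw [smul_smul, ← pow_add, hq, show n+(1+e) = n+1+e from by omega]
  rw [this, smul_add]
  abel


lemma bracket_expand (c : ℤ_[ℓ]) (P Q ΘP ΘQ E : M2) :
    ∃ F : M2, ((P + c•ΘP)*(Q + c•ΘQ) - (Q + c•ΘQ)*(P + c•ΘP)) * (1 + c•E)
      = (P*Q - Q*P) + c • F := by
  refine ⟨(P*Q - Q*P)*E + (P*ΘQ + ΘP*Q - Q*ΘP - ΘQ*P + c•(ΘP*ΘQ - ΘQ*ΘP)) * (1 + c•E), ?_⟩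
  simp only [mul_add, add_mul, sub_mul, mul_sub, mul_one, one_mul, smul_mul_assoc,
    mul_smul_comm, smul_add, smul_sub, smul_smul]
  abel

lemma gen_pair (e a s : ℕ) (ha : 1+e ≤ a) (hs : a ≤ s)
    (G : Subgroup (GL (Fin 2) ℤ_[ℓ])) (g h : GL (Fin 2) ℤ_[ℓ])
    (hgG : g ∈ G) (hhG : h ∈ G) (P Q ΘP ΘQ : M2)
    (hg : (g:M2) = 1 + ((ℓ:ℤ_[ℓ])^a) • (P + ((ℓ:ℤ_[ℓ])^(1+e)) • ΘP))
    (hh : (h:M2) = 1 + ((ℓ:ℤ_[ℓ])^s) • (Q + ((ℓ:ℤ_[ℓ])^(1+e)) • ΘQ)) :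
    ∃ u ∈ (⁅G,G⁆ : Subgroup (GL (Fin 2) ℤ_[ℓ])), ∃ F : M2,
      (u:M2) = 1 + ((ℓ:ℤ_[ℓ])^(a+s)) • ((P*Q - Q*P) + ((ℓ:ℤ_[ℓ])^(1+e)) • F) := by
  obtain ⟨E, hE⟩ := comm_form e a s ha (le_trans ha hs) _ _ g h hg hh
  obtain ⟨F, hF⟩ := bracket_expand ((ℓ:ℤ_[ℓ])^(1+e)) P Q ΘP ΘQ E
  exact ⟨⁅g,h⁆, Subgroup.commutator_mem_commutator hgG hhG, F, by rw [hE, hF]⟩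


lemma appr_dvd (x : ℤ_[ℓ]) : (ℓ:ℤ_[ℓ]) ∣ x - (x.appr 1 : ℤ_[ℓ]) := by
  have := PadicInt.appr_spec 1 x
  rw [Ideal.mem_span_singleton, pow_one] at this
  exact this

lemma scale_gen (m : ℕ) (hm : 1 ≤ m) (K : Subgroup (GL (Fin 2) ℤ_[ℓ]))
    (u : GL (Fin 2) ℤ_[ℓ]) (huK : u ∈ K) (W Y : M2) (d : ℤ_[ℓ]) (d' : ℕ)
    (hu : (u : M2) = 1 + ((ℓ:ℤ_[ℓ])^m) • W)
    (hW : ∀ i j, (ℓ:ℤ_[ℓ]) ∣ (W - d • Y) i j)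
    (hdd' : (ℓ:ℤ_[ℓ]) ∣ d * (d' : ℤ_[ℓ]) - 1) (x : ℤ_[ℓ]) :
    ∃ v ∈ K, ∃ Z : M2, (v : M2) = 1 + ((ℓ:ℤ_[ℓ])^m) • Z
      ∧ ∀ i j, (ℓ:ℤ_[ℓ]) ∣ (Z - x • Y) i j := by
  set r : ℕ := (((d' : ℤ_[ℓ]) * x).appr 1) with hr
  obtain ⟨Z, hZ, hdvd⟩ := pow_form m hm u W hu r
  refine ⟨u^r, pow_mem huK r, Z, hZ, ?_⟩
  intro i j
  have key : (Z - x • Y) i j = (Z - (r:ℤ_[ℓ]) • W) i j + (r:ℤ_[ℓ]) * ((W - d • Y) i j)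
      + (((r:ℤ_[ℓ])*d - x) * Y i j) := by
    simp only [Matrix.sub_apply, Matrix.smul_apply, smul_eq_mul]
    ring
  rw [key]
  have h3 : (ℓ:ℤ_[ℓ]) ∣ ((r:ℤ_[ℓ])*d - x) := by
    have e1 : (r:ℤ_[ℓ])*d - x = d * (((r:ℤ_[ℓ]) - (d' : ℤ_[ℓ]) * x)) + x * (d * (d' : ℤ_[ℓ]) - 1) := by
      ring
    rw [e1]
    refine dvd_add (Dvd.dvd.mul_left ?_ d) (Dvd.dvd.mul_left hdd' x)
    have := appr_dvd ((d' : ℤ_[ℓ]) * x)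
    rw [← hr] at this
    exact dvd_sub_comm.mp this
  exact dvd_add (dvd_add (hdvd i j) ((hW i j).mul_left _)) (h3.mul_right _)


-- span lemma: assume scaled generators available for each direction, combine
lemma span_combine (m : ℕ) (hm : 1 ≤ m) (K : Subgroup (GL (Fin 2) ℤ_[ℓ]))
    (hgen : ∀ Y : Matrix (Fin 2) (Fin 2) ℤ_[ℓ], (Y = eH ∨ Y = eE12 ∨ Y = eE21) →
      ∀ x : ℤ_[ℓ], ∃ v ∈ K, ∃ Z : M2, (v : M2) = 1 + ((ℓ:ℤ_[ℓ])^m) • Z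
        ∧ ∀ i j, (ℓ:ℤ_[ℓ]) ∣ (Z - x • Y) i j)
    (X : M2) (htr : (ℓ:ℤ_[ℓ]) ∣ (X 0 0 + X 1 1)) :
    ∃ v ∈ K, ∃ Z : M2, (v : M2) = 1 + ((ℓ:ℤ_[ℓ])^m) • Z
      ∧ ∀ i j, (ℓ:ℤ_[ℓ]) ∣ (Z - X) i j := by
  obtain ⟨v₁, hv₁K, Z₁, hv₁, hZ₁⟩ := hgen eH (Or.inl rfl) (X 0 0)
  obtain ⟨v₂, hv₂K, Z₂, hv₂, hZ₂⟩ := hgen eE12 (Or.inr (Or.inl rfl)) (X 0 1)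
  obtain ⟨v₃, hv₃K, Z₃, hv₃, hZ₃⟩ := hgen eE21 (Or.inr (Or.inr rfl)) (X 1 0)
  have h23 := prod_form m v₂ v₃ Z₂ Z₃ hv₂ hv₃
  set Z₂₃ : M2 := Z₂ + Z₃ + ((ℓ:ℤ_[ℓ])^m) • (Z₂*Z₃) with hZ₂₃def
  have h123 := prod_form m v₁ (v₂*v₃) Z₁ Z₂₃ hv₁ h23
  refine ⟨v₁ * (v₂ * v₃), mul_mem hv₁K (mul_mem hv₂K hv₃K),
    Z₁ + Z₂₃ + ((ℓ:ℤ_[ℓ])^m) • (Z₁*Z₂₃), h123, ?_⟩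
  intro i j
  have hsplit : (Z₁ + Z₂₃ + ((ℓ:ℤ_[ℓ])^m) • (Z₁*Z₂₃) - X) i j
      = (Z₁ - X 0 0 • (eH : M2)) i j + (Z₂ - X 0 1 • (eE12 : M2)) i j
        + (Z₃ - X 1 0 • (eE21 : M2)) i j
        + (ℓ:ℤ_[ℓ])^m * (Z₂*Z₃) i j + (ℓ:ℤ_[ℓ])^m * (Z₁*Z₂₃) i j
        + ((X 0 0 • (eH : M2) + X 0 1 • (eE12 : M2) + X 1 0 • (eE21 : M2) - X) i j) := by
    simp only [hZ₂₃def, Matrix.add_apply, Matrix.sub_apply, Matrix.smul_apply, smul_eq_mul]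
    ring
  rw [hsplit]
  have hℓm : (ℓ:ℤ_[ℓ]) ∣ (ℓ:ℤ_[ℓ])^m := dvd_pow_self _ (by omega)
  have hlast : (ℓ:ℤ_[ℓ]) ∣ ((X 0 0 • (eH : M2) + X 0 1 • (eE12 : M2) + X 1 0 • (eE21 : M2) - X) i j) := by
    fin_cases i <;> fin_cases j <;>
      simp [eH, eE12, eE21, Matrix.add_apply, Matrix.sub_apply, Matrix.smul_apply,
        sub_self, mul_one, mul_neg] <;>
      first
        | exact dvd_zero _
        | (rw [show -(X 0 0) - X 1 1 = -(X 0 0 + X 1 1) by ring]; exact (dvd_neg).mpr htr)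
        | (rw [show X 0 0 * -1 - X 1 1 = -(X 0 0 + X 1 1) by ring]; exact (dvd_neg).mpr htr)
  exact dvd_add (dvd_add (dvd_add (dvd_add (dvd_add (hZ₁ i j) (hZ₂ i j)) (hZ₃ i j))
    (hℓm.mul_right _)) (hℓm.mul_right _)) hlast

lemma level_elem (e n s : ℕ) (hn : 1 ≤ n) (hs : n ≤ s) (B Θ : M2) (hB2 : B * B = 0)
    (g : GL (Fin 2) ℤ_[ℓ])
    (hg : (g : M2) = 1 + ((ℓ:ℤ_[ℓ])^n) • (B + ((ℓ:ℤ_[ℓ])^(1+e)) • Θ)) :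
    ∃ Θ' : M2, ((g^(ℓ^(s-n)) : GL (Fin 2) ℤ_[ℓ]) : M2)
      = 1 + ((ℓ:ℤ_[ℓ])^s) • (B + ((ℓ:ℤ_[ℓ])^(1+e)) • Θ') := by
  obtain ⟨Θ', h⟩ := pow_iter e n hn B Θ hB2 g hg (s-n)
  rw [show n + (s-n) = s by omega] at h
  exact ⟨Θ', h⟩

lemma shift_level (c : ℤ_[ℓ]) (k : ℕ) (X F : M2) :
    (c^k) • (c • X + (c^(1+1)) • F) = (c^(k+1)) • (X + c • F) := by
  rw [smul_add, smul_add, smul_smul, smul_smul, smul_smul, ← pow_succ]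
  congr 1
  congr 1
  ring

lemma gen_all (e n : ℕ) (hn : 1 ≤ n) (hne : 1+e ≤ n)
    (heodd : Odd ℓ → e = 0) (he2 : ℓ = 2 → e = 1)
    (G : Subgroup (GL (Fin 2) ℤ_[ℓ]))
    (hsurj : ∀ A : GL (Fin 2) (ZMod (ℓ ^ (n + 1 + e))),
      Matrix.det ((A : Matrix (Fin 2) (Fin 2) (ZMod (ℓ ^ (n + 1 + e))))) = 1 →
      (∀ i j : Fin 2, ((ℓ : ZMod (ℓ ^ (n + 1 + e))) ^ n) ∣
          (((A : Matrix (Fin 2) (Fin 2) (ZMod (ℓ ^ (n + 1 + e))))) - 1) i j) →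
      ∃ g ∈ G, redGL ℓ (n + 1 + e) g = A)
    (m : ℕ) (hm : 2*n+e ≤ m) :
    ∀ Y : M2, (Y = eH ∨ Y = eE12 ∨ Y = eE21) → ∀ x : ℤ_[ℓ],
      ∃ v ∈ (⁅G,G⁆ : Subgroup (GL (Fin 2) ℤ_[ℓ])), ∃ Z : M2,
        (v : M2) = 1 + ((ℓ:ℤ_[ℓ])^m) • Z ∧ ∀ i j, (ℓ:ℤ_[ℓ]) ∣ (Z - x • Y) i j := by
  have hm1 : 1 ≤ m := by omega
  obtain ⟨gH, hgHG, ΘH, hgH⟩ := base_elem e n hn hne G hsurj eH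
    (by norm_num [eH]) 1 (by rw [eH_sq, one_smul])
  obtain ⟨g12, hg12G, Θ12, hg12⟩ := base_elem e n hn hne G hsurj eE12
    (by norm_num [eE12]) 0 (by rw [eE12_sq, zero_smul])
  obtain ⟨g21, hg21G, Θ21, hg21⟩ := base_elem e n hn hne G hsurj eE21
    (by norm_num [eE21]) 0 (by rw [eE21_sq, zero_smul])
  have hdvd1e : (ℓ:ℤ_[ℓ]) ∣ (ℓ:ℤ_[ℓ])^(1+e) := dvd_pow_self _ (by omega)
  rcases (Fact.out : Nat.Prime ℓ).eq_two_or_odd' with h2 | hodd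
  · -- ℓ = 2
    have he : e = 1 := he2 h2
    subst he
    subst h2
    intro Y hY x
    rcases hY with rfl | rfl | rfl
    · -- Y = eH via [e12, e21] at level n + (m-n)
      obtain ⟨Θ', h21s⟩ := level_elem 1 n (m-n) hn (by omega) eE21 Θ21
        (by rw [eE21_sq]) g21 hg21
      obtain ⟨u, huK, F, hu⟩ := gen_pair 1 n (m-n) (by omega) (by omega) G g12
        (g21^(2^(m-n-n))) hg12G (pow_mem hg21G _) eE12 eE21 Θ12 Θ' hg12 h21s
      rw [show n + (m-n) = m by omega, bracket_e12_e21] at hu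
      refine scale_gen m hm1 _ u huK _ eH 1 1 hu ?_ (by simp) x
      intro i j
      have : (((eH : Matrix (Fin 2) (Fin 2) ℤ_[2]) + ((2:ℕ):ℤ_[2])^(1+1) • F) - (1:ℤ_[2]) • (eH : Matrix (Fin 2) (Fin 2) ℤ_[2])) i j
          = ((2:ℕ):ℤ_[2])^(1+1) * F i j := by
        simp [Matrix.add_apply, Matrix.sub_apply, Matrix.smul_apply]
      rw [this]
      exact (hdvd1e.mul_right _)
    · -- Y = eE12 via [h, e12] at level n + (m-1-n), then shift
      obtain ⟨Θ', h12s⟩ := level_elem 1 n (m-1-n) hn (by omega) eE12 Θ12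
        (by rw [eE12_sq]) g12 hg12
      obtain ⟨u, huK, F, hu⟩ := gen_pair 1 n (m-1-n) (by omega) (by omega) G gH
        (g12^(2^(m-1-n-n))) hgHG (pow_mem hg12G _) eH eE12 ΘH Θ' hgH h12s
      rw [bracket_h_e12] at hu
      rw [show ((2:ℤ_[2]) • (eE12 : Matrix (Fin 2) (Fin 2) ℤ_[2])) = ((2:ℕ):ℤ_[2]) • (eE12 : Matrix (Fin 2) (Fin 2) ℤ_[2]) by norm_num] at hu
      rw [shift_level ((2:ℕ):ℤ_[2]) (n+(m-1-n)) eE12 F,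
        show n+(m-1-n)+1 = m by omega] at hu
      refine scale_gen m hm1 _ u huK _ eE12 1 1 hu ?_ (by simp) x
      intro i j
      have : (((eE12 : Matrix (Fin 2) (Fin 2) ℤ_[2]) + ((2:ℕ):ℤ_[2]) • F) - (1:ℤ_[2]) • (eE12 : Matrix (Fin 2) (Fin 2) ℤ_[2])) i j
          = ((2:ℕ):ℤ_[2]) * F i j := by
        simp [Matrix.add_apply, Matrix.sub_apply, Matrix.smul_apply]
      rw [this]
      exact dvd_mul_right _ _
    · -- Y = eE21 via [h, e21] at level n + (m-1-n), then shift
      obtain ⟨Θ', h21s⟩ := level_elem 1 n (m-1-n) hn (by omega) eE21 Θ21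
        (by rw [eE21_sq]) g21 hg21
      obtain ⟨u, huK, F, hu⟩ := gen_pair 1 n (m-1-n) (by omega) (by omega) G gH
        (g21^(2^(m-1-n-n))) hgHG (pow_mem hg21G _) eH eE21 ΘH Θ' hgH h21s
      rw [bracket_h_e21] at hu
      rw [show ((-2:ℤ_[2]) • (eE21 : Matrix (Fin 2) (Fin 2) ℤ_[2])) = ((2:ℕ):ℤ_[2]) • (-(eE21 : Matrix (Fin 2) (Fin 2) ℤ_[2])) by
        push_cast
        module] at hu
      rw [shift_level ((2:ℕ):ℤ_[2]) (n+(m-1-n)) (-eE21) F,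
        show n+(m-1-n)+1 = m by omega] at hu
      refine scale_gen m hm1 _ u huK _ eE21 (-1) 1 hu ?_ ?_ x
      · intro i j
        have : ((-(eE21 : Matrix (Fin 2) (Fin 2) ℤ_[2]) + ((2:ℕ):ℤ_[2]) • F) - (-1:ℤ_[2]) • (eE21 : Matrix (Fin 2) (Fin 2) ℤ_[2])) i j
            = ((2:ℕ):ℤ_[2]) * F i j := by
          simp [Matrix.add_apply, Matrix.sub_apply, Matrix.smul_apply, Matrix.neg_apply]
        rw [this]
        exact dvd_mul_right _ _
      · show ((2:ℕ):ℤ_[2]) ∣ (-1) * ((1:ℕ):ℤ_[2]) - 1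
        push_cast
        norm_num
  · -- ℓ odd
    have he : e = 0 := heodd hodd
    subst he
    have hoddnat : ℓ % 2 = 1 := Nat.odd_iff.mp hodd
    intro Y hY x
    rcases hY with rfl | rfl | rfl
    · -- Y = eH via [e12, e21]
      obtain ⟨Θ', h21s⟩ := level_elem 0 n (m-n) hn (by omega) eE21 Θ21
        (by rw [eE21_sq]) g21 hg21
      obtain ⟨u, huK, F, hu⟩ := gen_pair 0 n (m-n) (by omega) (by omega) G g12
        (g21^(ℓ^(m-n-n))) hg12G (pow_mem hg21G _) eE12 eE21 Θ12 Θ' hg12 h21s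
      rw [show n + (m-n) = m by omega, bracket_e12_e21] at hu
      refine scale_gen m hm1 _ u huK _ eH 1 1 hu ?_ (by simp) x
      intro i j
      have : (((eH : M2) + ((ℓ:ℤ_[ℓ]))^(1+0) • F) - (1:ℤ_[ℓ]) • (eH : M2)) i j
          = ((ℓ:ℤ_[ℓ]))^(1+0) * F i j := by
        simp [Matrix.add_apply, Matrix.sub_apply, Matrix.smul_apply]
      rw [this]
      exact hdvd1e.mul_right _
    · -- Y = eE12 via [h, e12], d = 2
      obtain ⟨Θ', h12s⟩ := level_elem 0 n (m-n) hn (by omega) eE12 Θ12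
        (by rw [eE12_sq]) g12 hg12
      obtain ⟨u, huK, F, hu⟩ := gen_pair 0 n (m-n) (by omega) (by omega) G gH
        (g12^(ℓ^(m-n-n))) hgHG (pow_mem hg12G _) eH eE12 ΘH Θ' hgH h12s
      rw [show n + (m-n) = m by omega, bracket_h_e12] at hu
      refine scale_gen m hm1 _ u huK _ eE12 2 ((ℓ+1)/2) hu ?_ ?_ x
      · intro i j
        have : (((2:ℤ_[ℓ]) • (eE12 : M2) + ((ℓ:ℤ_[ℓ]))^(1+0) • F) - (2:ℤ_[ℓ]) • (eE12 : M2)) i j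
            = ((ℓ:ℤ_[ℓ]))^(1+0) * F i j := by
          simp [Matrix.add_apply, Matrix.sub_apply, Matrix.smul_apply]
        rw [this]
        exact hdvd1e.mul_right _
      · have hnat : 2*((ℓ+1)/2) = ℓ+1 := by omega
        have : (2:ℤ_[ℓ]) * (((ℓ+1)/2 : ℕ) : ℤ_[ℓ]) - 1 = (ℓ:ℤ_[ℓ]) := by
          have := congrArg (fun t : ℕ => (t : ℤ_[ℓ])) hnat
          push_cast at this
          linear_combination this
        rw [this]
    · -- Y = eE21 via [h, e21], d = -2
      obtain ⟨Θ', h21s⟩ := level_elem 0 n (m-n) hn (by omega) eE21 Θ21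
        (by rw [eE21_sq]) g21 hg21
      obtain ⟨u, huK, F, hu⟩ := gen_pair 0 n (m-n) (by omega) (by omega) G gH
        (g21^(ℓ^(m-n-n))) hgHG (pow_mem hg21G _) eH eE21 ΘH Θ' hgH h21s
      rw [show n + (m-n) = m by omega, bracket_h_e21] at hu
      refine scale_gen m hm1 _ u huK _ eE21 (-2) ((ℓ-1)/2) hu ?_ ?_ x
      · intro i j
        have : (((-2:ℤ_[ℓ]) • (eE21 : M2) + ((ℓ:ℤ_[ℓ]))^(1+0) • F) - (-2:ℤ_[ℓ]) • (eE21 : M2)) i j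
            = ((ℓ:ℤ_[ℓ]))^(1+0) * F i j := by
          simp [Matrix.add_apply, Matrix.sub_apply, Matrix.smul_apply]
        rw [this]
        exact hdvd1e.mul_right _
      · have hnat : 2*((ℓ-1)/2) = ℓ-1 := by omega
        have hc : ((ℓ-1 : ℕ) : ℤ_[ℓ]) = (ℓ:ℤ_[ℓ]) - 1 := by
          have h1 : 1 ≤ ℓ := by omega
          push_cast [Nat.cast_sub h1]
          ring
        have : (-2:ℤ_[ℓ]) * (((ℓ-1)/2 : ℕ) : ℤ_[ℓ]) - 1 = -(ℓ:ℤ_[ℓ]) := by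
          have := congrArg (fun t : ℕ => (t : ℤ_[ℓ])) hnat
          push_cast at this
          rw [hc] at this
          linear_combination -this
        rw [this]
        exact dvd_neg.mpr dvd_rfl

lemma K_det (G : Subgroup (GL (Fin 2) ℤ_[ℓ]))
    {k : GL (Fin 2) ℤ_[ℓ]} (hk : k ∈ (⁅G,G⁆ : Subgroup (GL (Fin 2) ℤ_[ℓ]))) :
    Matrix.det (k : M2) = 1 := by
  have hle : (⁅G,G⁆ : Subgroup (GL (Fin 2) ℤ_[ℓ]))
      ≤ (Matrix.GeneralLinearGroup.det : GL (Fin 2) ℤ_[ℓ] →* ℤ_[ℓ]ˣ).ker := by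
    rw [Subgroup.commutator_le]
    intro g₁ _ g₂ _
    rw [MonoidHom.mem_ker, map_commutatorElement]
    exact commutatorElement_eq_one_iff_commute.mpr (Commute.all _ _)
  have h1 : Matrix.GeneralLinearGroup.det k = 1 := hle hk
  have h2 : ((Matrix.GeneralLinearGroup.det k : ℤ_[ℓ]ˣ) : ℤ_[ℓ]) = Matrix.det (k : M2) := rfl
  rw [h1] at h2
  exact h2.symm.trans rfl

lemma main_induct (e n : ℕ) (hn : 1 ≤ n) (hne : 1+e ≤ n)
    (heodd : Odd ℓ → e = 0) (he2 : ℓ = 2 → e = 1)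
    (G : Subgroup (GL (Fin 2) ℤ_[ℓ]))
    (hsurj : ∀ A : GL (Fin 2) (ZMod (ℓ ^ (n + 1 + e))),
      Matrix.det ((A : Matrix (Fin 2) (Fin 2) (ZMod (ℓ ^ (n + 1 + e))))) = 1 →
      (∀ i j : Fin 2, ((ℓ : ZMod (ℓ ^ (n + 1 + e))) ^ n) ∣
          (((A : Matrix (Fin 2) (Fin 2) (ZMod (ℓ ^ (n + 1 + e))))) - 1) i j) →
      ∃ g ∈ G, redGL ℓ (n + 1 + e) g = A)
    (D : GL (Fin 2) ℤ_[ℓ]) (hdet : Matrix.det (D : M2) = 1)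
    (hD : ∀ i j, ((ℓ:ℤ_[ℓ])^(2*n+e)) ∣ ((D : M2) - 1) i j) :
    ∀ t : ℕ, ∃ k ∈ (⁅G,G⁆ : Subgroup (GL (Fin 2) ℤ_[ℓ])), ∃ X : M2,
      (((k⁻¹ * D : GL (Fin 2) ℤ_[ℓ])) : M2) = 1 + ((ℓ:ℤ_[ℓ])^(2*n+e+t)) • X := by
  intro t
  induction t with
  | zero =>
    obtain ⟨X, hX⟩ := extractM (c := (ℓ:ℤ_[ℓ])^(2*n+e)) (A := (D : M2)) (B := 1) hD
    refine ⟨1, one_mem _, X, ?_⟩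
    rw [inv_one, one_mul, Nat.add_zero]
    exact hX
  | succ t ih =>
    obtain ⟨k, hkK, X, hX⟩ := ih
    set mt : ℕ := 2*n+e+t with hmt
    -- determinant of k⁻¹ * D is 1
    have hdetk : Matrix.det (((k⁻¹ * D : GL (Fin 2) ℤ_[ℓ])) : M2) = 1 := by
      have hdk := K_det G hkK
      have hki : Matrix.det ((k⁻¹ : GL (Fin 2) ℤ_[ℓ]) : M2) = 1 := by
        have h1 : (k : M2) * ((k⁻¹ : GL (Fin 2) ℤ_[ℓ]) : M2) = 1 := by
          rw [← Units.val_mul, mul_inv_cancel, Units.val_one]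
        have := congrArg Matrix.det h1
        rw [Matrix.det_mul, hdk, one_mul, Matrix.det_one] at this
        exact this
      have hco : (((k⁻¹ * D : GL (Fin 2) ℤ_[ℓ])) : M2) = ((k⁻¹ : GL (Fin 2) ℤ_[ℓ]) : M2) * (D : M2) :=
        Units.val_mul _ _
      rw [hco, Matrix.det_mul, hki, one_mul, hdet]
    -- trace condition
    have htr : (ℓ:ℤ_[ℓ]) ∣ (X 0 0 + X 1 1) := by
      apply traceless mt (by omega) X
      rw [← hX]
      exact hdetk
    -- span
    obtain ⟨v, hvK, Z, hv, hZ⟩ := span_combine mt (by omega) (⁅G,G⁆ : Subgroup (GL (Fin 2) ℤ_[ℓ]))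
      (gen_all e n hn hne heodd he2 G hsurj mt (by omega)) X htr
    obtain ⟨Θ, hΘ⟩ := extractM (c := (ℓ:ℤ_[ℓ])) (A := Z) (B := X) hZ
    refine ⟨k * v, mul_mem hkK hvK, -(((v⁻¹ : GL (Fin 2) ℤ_[ℓ]) : M2) * Θ), ?_⟩
    have hco : ((((k*v)⁻¹ * D : GL (Fin 2) ℤ_[ℓ])) : M2)
        = ((v⁻¹ : GL (Fin 2) ℤ_[ℓ]) : M2) * (((k⁻¹ * D : GL (Fin 2) ℤ_[ℓ])) : M2) := by
      rw [_root_.mul_inv_rev, ← Units.val_mul, mul_assoc]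
    rw [hco, hX]
    have hXZ : (1 : M2) + ((ℓ:ℤ_[ℓ])^mt) • X
        = (1 + ((ℓ:ℤ_[ℓ])^mt) • Z) + ((ℓ:ℤ_[ℓ])^mt) • ((-(ℓ:ℤ_[ℓ])) • Θ) := by
      rw [hΘ]
      simp only [smul_add, smul_smul, smul_neg, neg_smul]
      abel
    rw [hXZ, ← hv, mul_add]
    have hvi : ((v⁻¹ : GL (Fin 2) ℤ_[ℓ]) : M2) * (v : M2) = 1 := by
      rw [← Units.val_mul, inv_mul_cancel, Units.val_one]
    rw [hvi, mul_smul_comm]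
    congr 1
    rw [show (2*n+e+(t+1)) = mt + 1 by omega]
    rw [mul_smul_comm, smul_smul]
    rw [show (ℓ:ℤ_[ℓ])^mt * -(ℓ:ℤ_[ℓ]) = -((ℓ:ℤ_[ℓ])^(mt+1)) by rw [pow_succ]; ring]
    simp only [neg_smul, smul_neg]

lemma dvd_mul_entries (c : ℤ_[ℓ]) (X P Q : M2) (h : ∀ i j, c ∣ X i j) :
    ∀ i j, c ∣ (P*(X*Q)) i j := by
  intro i j
  rw [Matrix.mul_apply]
  refine Finset.dvd_sum fun l _ => ?_
  refine Dvd.dvd.mul_left ?_ _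
  rw [Matrix.mul_apply]
  exact Finset.dvd_sum fun k _ => (h l k).mul_right _

lemma norm_le_of_dvd (m : ℕ) (x : ℤ_[ℓ]) (h : ((ℓ:ℤ_[ℓ])^m) ∣ x) :
    ‖x‖ ≤ ((ℓ:ℝ)⁻¹)^m := by
  have h1 : ‖x‖ ≤ (ℓ:ℝ) ^ (-(m:ℤ)) := by
    rw [PadicInt.norm_le_pow_iff_mem_span_pow]
    exact Ideal.mem_span_singleton.mpr h
  calc ‖x‖ ≤ (ℓ:ℝ) ^ (-(m:ℤ)) := h1
    _ = ((ℓ:ℝ)⁻¹)^m := by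
      rw [inv_pow, ← zpow_natCast, ← _root_.zpow_neg]

lemma entry_tendsto (M0 : ℕ) (u : ℕ → ℤ_[ℓ]) (a : ℤ_[ℓ])
    (h : ∀ t, ((ℓ:ℤ_[ℓ])^(M0+t)) ∣ (u t - a)) :
    Filter.Tendsto u Filter.atTop (nhds a) := by
  have hℓ1 : (1:ℝ) < (ℓ:ℝ) := by
    exact_mod_cast (Fact.out : Nat.Prime ℓ).one_lt
  rw [tendsto_iff_norm_sub_tendsto_zero]
  apply squeeze_zero (fun t => norm_nonneg _)
    (g := fun t => ((ℓ:ℝ)⁻¹)^M0 * ((ℓ:ℝ)⁻¹)^t)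
  · intro t
    calc ‖u t - a‖ ≤ ((ℓ:ℝ)⁻¹)^(M0+t) := norm_le_of_dvd (M0+t) _ (h t)
      _ = ((ℓ:ℝ)⁻¹)^M0 * ((ℓ:ℝ)⁻¹)^t := pow_add _ _ _
  · have h0 : (0:ℝ) ≤ (ℓ:ℝ)⁻¹ := by positivity
    have h1 : (ℓ:ℝ)⁻¹ < 1 := by
      rw [inv_lt_one_iff₀]
      right
      exact hℓ1
    have := (tendsto_pow_atTop_nhds_zero_of_lt_one h0 h1).const_mul (((ℓ:ℝ)⁻¹)^M0)
    simpa using this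

lemma matrix_tendsto (f : ℕ → M2) (L : M2)
    (h : ∀ i j, Filter.Tendsto (fun t => f t i j) Filter.atTop (nhds (L i j))) :
    Filter.Tendsto f Filter.atTop (nhds L) := by
  apply tendsto_pi_nhds.mpr
  intro i
  apply tendsto_pi_nhds.mpr
  intro j
  exact h i j

lemma gl_tendsto (f : ℕ → GL (Fin 2) ℤ_[ℓ]) (L : GL (Fin 2) ℤ_[ℓ])
    (h1 : Filter.Tendsto (fun t => ((f t : M2))) Filter.atTop (nhds (L : M2)))
    (h2 : Filter.Tendsto (fun t => (((f t)⁻¹ : GL (Fin 2) ℤ_[ℓ]) : M2)) Filter.atTop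
      (nhds ((L⁻¹ : GL (Fin 2) ℤ_[ℓ]) : M2))) :
    Filter.Tendsto f Filter.atTop (nhds L) := by
  rw [Units.isEmbedding_embedProduct.tendsto_nhds_iff]
  exact h1.prodMk_nhds ((MulOpposite.continuous_op.tendsto _).comp h2)

theorem stmt8' (e n : ℕ)
    (he : (Odd ℓ → e = 0) ∧ (ℓ = 2 → e = 1))
    (hn : 1 ≤ n) (h2 : ℓ = 2 → 2 ≤ n)
    (G : Subgroup (GL (Fin 2) ℤ_[ℓ]))
    (hsurj : ∀ A : GL (Fin 2) (ZMod (ℓ ^ (n + 1 + e))),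
      Matrix.det ((A : Matrix (Fin 2) (Fin 2) (ZMod (ℓ ^ (n + 1 + e))))) = 1 →
      (∀ i j : Fin 2, ((ℓ : ZMod (ℓ ^ (n + 1 + e))) ^ n) ∣
          (((A : Matrix (Fin 2) (Fin 2) (ZMod (ℓ ^ (n + 1 + e))))) - 1) i j) →
      ∃ g ∈ G, redGL ℓ (n + 1 + e) g = A) :
    ∀ A : GL (Fin 2) ℤ_[ℓ],
      Matrix.det ((A : Matrix (Fin 2) (Fin 2) ℤ_[ℓ])) = 1 →
      (∀ i j : Fin 2, ((ℓ : ℤ_[ℓ]) ^ (2 * n + e)) ∣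
          (((A : Matrix (Fin 2) (Fin 2) ℤ_[ℓ])) - 1) i j) →
      A ∈ closure ((⁅G, G⁆ : Subgroup (GL (Fin 2) ℤ_[ℓ])) : Set (GL (Fin 2) ℤ_[ℓ])) := by
  intro A hdetA hA
  have hp := (Fact.out : Nat.Prime ℓ)
  have hne : 1 + e ≤ n := by
    rcases hp.eq_two_or_odd' with h2' | hodd
    · rw [he.2 h2']; exact h2 h2'
    · rw [he.1 hodd]; omega
  have hmi := main_induct e n hn hne he.1 he.2 G hsurj A hdetA hA
  choose k hkK X hkX using hmi
  have hAk : ∀ t i j, ((ℓ:ℤ_[ℓ])^(2*n+e+t)) ∣ (((A : M2)) - ((k t : M2))) i j := by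
    intro t i j
    have hco : (A : M2) = (k t : M2) * ((((k t)⁻¹ * A : GL (Fin 2) ℤ_[ℓ])) : M2) := by
      rw [← Units.val_mul, mul_inv_cancel_left]
    have : ((A : M2)) - ((k t : M2))
        = ((ℓ:ℤ_[ℓ])^(2*n+e+t)) • ((k t : M2) * X t) := by
      conv_lhs => rw [hco, hkX t]
      rw [mul_add, mul_one, mul_smul_comm]
      abel
    rw [this]
    simp only [Matrix.smul_apply, smul_eq_mul]
    exact Dvd.intro _ rfl
  have hAki : ∀ t i j, ((ℓ:ℤ_[ℓ])^(2*n+e+t)) ∣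
      ((((A⁻¹ : GL (Fin 2) ℤ_[ℓ]) : M2)) - (((k t)⁻¹ : GL (Fin 2) ℤ_[ℓ]) : M2)) i j := by
    intro t i j
    have e1 : (A : M2) * ((A⁻¹ : GL (Fin 2) ℤ_[ℓ]) : M2) = 1 := by
      rw [← Units.val_mul, mul_inv_cancel, Units.val_one]
    have e2 : (((k t)⁻¹ : GL (Fin 2) ℤ_[ℓ]) : M2) * (k t : M2) = 1 := by
      rw [← Units.val_mul, inv_mul_cancel, Units.val_one]
    have key : (((k t)⁻¹ : GL (Fin 2) ℤ_[ℓ]) : M2) *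
        ((((A : M2)) - ((k t : M2))) * ((A⁻¹ : GL (Fin 2) ℤ_[ℓ]) : M2))
        = (((k t)⁻¹ : GL (Fin 2) ℤ_[ℓ]) : M2) - ((A⁻¹ : GL (Fin 2) ℤ_[ℓ]) : M2) := by
      rw [sub_mul, e1, mul_sub, mul_one, ← mul_assoc, e2, one_mul]
    have hdvd := dvd_mul_entries ((ℓ:ℤ_[ℓ])^(2*n+e+t)) (((A : M2)) - ((k t : M2)))
      (((k t)⁻¹ : GL (Fin 2) ℤ_[ℓ]) : M2) ((A⁻¹ : GL (Fin 2) ℤ_[ℓ]) : M2) (hAk t) i j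
    rw [key] at hdvd
    have hsign : ((((A⁻¹ : GL (Fin 2) ℤ_[ℓ]) : M2)) - (((k t)⁻¹ : GL (Fin 2) ℤ_[ℓ]) : M2)) i j
        = -(((((k t)⁻¹ : GL (Fin 2) ℤ_[ℓ]) : M2) - ((A⁻¹ : GL (Fin 2) ℤ_[ℓ]) : M2)) i j) := by
      simp only [Matrix.sub_apply]
      ring
    rw [hsign]
    exact dvd_neg.mpr hdvd
  apply mem_closure_of_tendsto (f := fun t => k t) (b := Filter.atTop)
  · apply gl_tendsto
    · apply matrix_tendsto
      intro i j
      apply entry_tendsto (2*n+e)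
      intro t
      have : (k t : M2) i j - (A : M2) i j = -((((A : M2)) - ((k t : M2))) i j) := by
        simp only [Matrix.sub_apply]; ring
      rw [this]
      exact dvd_neg.mpr (hAk t i j)
    · apply matrix_tendsto
      intro i j
      apply entry_tendsto (2*n+e)
      intro t
      have : (((k t)⁻¹ : GL (Fin 2) ℤ_[ℓ]) : M2) i j - ((A⁻¹ : GL (Fin 2) ℤ_[ℓ]) : M2) i j
          = -(((((A⁻¹ : GL (Fin 2) ℤ_[ℓ]) : M2)) - (((k t)⁻¹ : GL (Fin 2) ℤ_[ℓ]) : M2)) i j) := by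
        simp only [Matrix.sub_apply]; ring
      rw [this]
      exact dvd_neg.mpr (hAki t i j)
  · exact Filter.Eventually.of_forall (fun t => hkK t)

/-- Let `ℓ` be a prime, `e = 0` for `ℓ` odd and `e = 1` for
`ℓ = 2`, and `n ≥ 1` (`n ≥ 2` if `ℓ = 2`).  Let `G` be a closed subgroup of
`GL₂(ℤ_ℓ)` whose image mod `ℓ^{n+1+e}` contains every
`A ∈ SL₂(ℤ/ℓ^{n+1+e}ℤ)` with `A ≡ I mod ℓⁿ`.  Then the closure of the
commutator subgroup `[G,G]` contains `{A ∈ SL₂(ℤ_ℓ) : A ≡ I mod ℓ^{2n+e}}`. -/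
theorem stmt8 (ℓ : ℕ) [Fact (Nat.Prime ℓ)] (e n : ℕ)
    (he : (Odd ℓ → e = 0) ∧ (ℓ = 2 → e = 1))
    (hn : 1 ≤ n) (h2 : ℓ = 2 → 2 ≤ n)
    (G : Subgroup (GL (Fin 2) ℤ_[ℓ]))
    (hclosed : IsClosed (G : Set (GL (Fin 2) ℤ_[ℓ])))
    (hsurj : ∀ A : GL (Fin 2) (ZMod (ℓ ^ (n + 1 + e))),
      Matrix.det ((A : Matrix (Fin 2) (Fin 2) (ZMod (ℓ ^ (n + 1 + e))))) = 1 →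
      (∀ i j : Fin 2, ((ℓ : ZMod (ℓ ^ (n + 1 + e))) ^ n) ∣
          (((A : Matrix (Fin 2) (Fin 2) (ZMod (ℓ ^ (n + 1 + e))))) - 1) i j) →
      ∃ g ∈ G, redGL ℓ (n + 1 + e) g = A) :
    ∀ A : GL (Fin 2) ℤ_[ℓ],
      Matrix.det ((A : Matrix (Fin 2) (Fin 2) ℤ_[ℓ])) = 1 →
      (∀ i j : Fin 2, ((ℓ : ℤ_[ℓ]) ^ (2 * n + e)) ∣
          (((A : Matrix (Fin 2) (Fin 2) ℤ_[ℓ])) - 1) i j) →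
      A ∈ closure ((⁅G, G⁆ : Subgroup (GL (Fin 2) ℤ_[ℓ])) : Set (GL (Fin 2) ℤ_[ℓ])) := by
  intro A hdetA hA
  exact stmt8' e n he hn h2 G hsurj A hdetA hA
end

section
/- Let ℓ be an odd prime and G a closed subgroup of GL₂(ℤ_ℓ) such that det(G) = ℤ_ℓ^× and ℓ does not divide the order of the image G(ℓ) of G modulo ℓ. Then for every n ≥ 1, det(G_n) = 1 + ℓⁿℤ_ℓ, where G_n = {A ∈ G : A ≡ I mod ℓⁿ}. -/
open Matrix

variable {p : ℕ} [Fact p.Prime]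

lemma pdvd_iff (x : ℤ_[p]) (n : ℕ) : (p:ℤ_[p])^n ∣ x ↔ ‖x‖ ≤ (p : ℝ) ^ (-n : ℤ) := by
  rw [PadicInt.norm_le_pow_iff_mem_span_pow, Ideal.mem_span_singleton]

lemma punit_of_one_dvd (x : ℤ_[p]) (h : (p:ℤ_[p]) ∣ x - 1) : IsUnit x := by
  rw [PadicInt.isUnit_iff]
  have h1 : ‖x - 1‖ < 1 := (PadicInt.norm_lt_one_iff_dvd _).mpr h
  have hx : x = 1 + (x - 1) := by ring
  rw [hx, PadicInt.norm_add_eq_max_of_ne (by simp; linarith)]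
  simp; linarith

lemma expand_pow_p {k : ℕ} (hodd : Odd p) (hk : 1 ≤ k) (b : ℤ_[p]) :
    ∃ c, (1 + (p:ℤ_[p])^k*b)^p = 1 + (p:ℤ_[p])^(k+1)*b + (p:ℤ_[p])^(2*k+1)*c := by
  have hp := (Fact.out : p.Prime)
  have hp3 : 3 ≤ p := by
    rcases hp.two_le.lt_or_eq with h | h
    · omega
    · exfalso; rw [← h] at hodd; exact (Nat.not_odd_iff_even.2 even_two) hodd
  set x := (p:ℤ_[p])^k*b with hx
  have key : (p:ℤ_[p])^(2*k+1) ∣ ∑ m ∈ Finset.Ico 2 (p+1), x^m * (p.choose m : ℤ_[p]) := by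
    apply Finset.dvd_sum
    intro m hm
    simp only [Finset.mem_Ico] at hm
    have hxm : x ^ m = (p:ℤ_[p])^(k*m) * b^m := by rw [hx, mul_pow, ← pow_mul]
    rcases lt_or_eq_of_le (Nat.lt_succ_iff.mp hm.2) with hmp | hmp
    · -- m < p : use p ∣ choose p m
      obtain ⟨t, ht⟩ := hp.dvd_choose_self (by omega : m ≠ 0) hmp
      have : x ^ m * (p.choose m : ℤ_[p]) = (p:ℤ_[p])^(2*k+1) *
          ((p:ℤ_[p])^(k*m - 2*k) * b^m * t) := by
        rw [hxm, ht]
        push_cast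
        rw [show (2*k+1 : ℕ) = 2*k + 1 from rfl]
        rw [← pow_sub_mul_pow (p:ℤ_[p]) (by nlinarith : 2*k ≤ k*m)]
        ring
      exact ⟨_, this⟩
    · -- m = p
      subst hmp
      refine Dvd.dvd.mul_right ?_ _
      rw [hxm]
      exact Dvd.dvd.mul_right (pow_dvd_pow _ (by nlinarith)) _
  obtain ⟨c, hc⟩ := key
  refine ⟨c, ?_⟩
  have hsplit : Finset.range (p+1) = insert 0 (insert 1 (Finset.Ico 2 (p+1))) := by
    ext m; simp [Finset.mem_Ico]; omega
  rw [add_comm (1:ℤ_[p]) x, add_pow]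
  simp only [one_pow, mul_one]
  rw [hsplit, Finset.sum_insert (by simp), Finset.sum_insert (by simp)]
  rw [hc]
  simp [Nat.choose_one_right, hx]
  ring

lemma pth_root {n : ℕ} (hodd : Odd p) (hn : 1 ≤ n) (v : ℤ_[p])
    (hv : (p:ℤ_[p])^(n+1) ∣ v - 1) :
    ∃ w : ℤ_[p], (p:ℤ_[p])^n ∣ w - 1 ∧ w^p = v := by
  have hp := (Fact.out : p.Prime)
  have hp1 : (1:ℝ) < p := by exact_mod_cast hp.one_lt
  have hr1 : (p:ℝ)⁻¹ < 1 := by rw [inv_lt_one_iff₀]; right; exact hp1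
  have hr0 : (0:ℝ) < (p:ℝ)⁻¹ := by positivity
  obtain ⟨b, hb⟩ := hv
  have hv1 : v = 1 + (p:ℤ_[p])^(n+1) * b := by rw [← hb]; ring
  obtain ⟨c, hc⟩ := expand_pow_p hodd hn b
  set a₀ := 1 + (p:ℤ_[p])^n * b with ha₀
  set F : Polynomial ℤ_[p] := Polynomial.X ^ p - Polynomial.C v with hF
  have hFa : F.eval a₀ = (p:ℤ_[p])^(2*n+1) * c := by
    simp only [hF, Polynomial.eval_sub, Polynomial.eval_pow, Polynomial.eval_X,
      Polynomial.eval_C]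
    rw [hc, hv1]; ring
  have ha₀u : IsUnit a₀ := by
    apply punit_of_one_dvd
    have : a₀ - 1 = (p:ℤ_[p]) * ((p:ℤ_[p])^(n-1) * b) := by
      rw [ha₀]; rw [show (p:ℤ_[p]) * ((p:ℤ_[p])^(n-1) * b) = (p:ℤ_[p])^(n-1+1) * b by ring,
        Nat.sub_add_cancel hn]; ring
    exact ⟨_, this⟩
  have hda : F.derivative.eval a₀ = (p:ℤ_[p]) * a₀^(p-1) := by
    simp [hF, Polynomial.derivative_X_pow]
  have hnormd : ‖F.derivative.eval a₀‖ = (p:ℝ)⁻¹ := by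
    rw [hda, norm_mul, PadicInt.norm_p, norm_pow,
      PadicInt.isUnit_iff.mp ha₀u]
    simp
  have hlt : ‖F.eval a₀‖ < ‖F.derivative.eval a₀‖ ^ 2 := by
    rw [hFa, hnormd, norm_mul]
    calc ‖(p:ℤ_[p])^(2*n+1)‖ * ‖c‖ ≤ ((p:ℝ)⁻¹)^(2*n+1) * 1 := by
          rw [norm_pow, PadicInt.norm_p]
          exact mul_le_mul_of_nonneg_left (PadicInt.norm_le_one c) (by positivity)
      _ = ((p:ℝ)⁻¹)^(2*n+1) := mul_one _
      _ ≤ ((p:ℝ)⁻¹)^3 := pow_le_pow_of_le_one (le_of_lt hr0) (le_of_lt hr1) (by omega)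
      _ < ((p:ℝ)⁻¹)^2 := by
          apply pow_lt_pow_right_of_lt_one₀ hr0 hr1; omega
  obtain ⟨z, hz0, hzdist, -, -⟩ := hensels_lemma hlt
  have hzp : z ^ p = v := by
    have : z^p - v = 0 := by simpa [hF] using hz0
    exact sub_eq_zero.mp this
  have h1 : (p:ℤ_[p]) ∣ z - 1 := by
    rw [← PadicInt.norm_lt_one_iff_dvd]
    have hza : ‖z - a₀‖ < 1 := lt_of_lt_of_le (hnormd ▸ hzdist) (le_of_lt hr1)
    have ha1 : ‖a₀ - 1‖ < 1 := by
      rw [PadicInt.norm_lt_one_iff_dvd]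
      have : a₀ - 1 = (p:ℤ_[p]) * ((p:ℤ_[p])^(n-1) * b) := by
        rw [ha₀, show (p:ℤ_[p]) * ((p:ℤ_[p])^(n-1) * b) = (p:ℤ_[p])^(n-1+1) * b by ring,
          Nat.sub_add_cancel hn]; ring
      exact ⟨_, this⟩
    have : z - 1 = (z - a₀) + (a₀ - 1) := by ring
    rw [this]
    exact lt_of_le_of_lt (PadicInt.nonarchimedean _ _) (max_lt hza ha1)
  by_cases hz1 : z = 1
  · refine ⟨1, by simp, ?_⟩
    rw [← hzp, hz1]
  · have hne : z - 1 ≠ 0 := sub_ne_zero.mpr hz1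
    set k := (z-1).valuation with hk
    set u := PadicInt.unitCoeff hne with hu
    have spec : z - 1 = (u:ℤ_[p]) * (p:ℤ_[p])^k := PadicInt.unitCoeff_spec hne
    have hpnu : ¬ IsUnit (p:ℤ_[p]) := by
      rw [PadicInt.isUnit_iff, PadicInt.norm_p]
      intro h; rw [inv_eq_one] at h; rw [h] at hp1; linarith
    have hk1 : 1 ≤ k := by
      by_contra hk0
      push_neg at hk0
      interval_cases k
      · simp at spec
        rw [spec] at h1
        exact hpnu (isUnit_of_dvd_unit h1 u.isUnit)
    have hzform : z = 1 + (p:ℤ_[p])^k * (u:ℤ_[p]) := by linear_combination spec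
    obtain ⟨c', hc'⟩ := expand_pow_p hodd hk1 (u:ℤ_[p])
    have hs : v - 1 = (p:ℤ_[p])^(k+1) * ((u:ℤ_[p]) + (p:ℤ_[p])^k * c') := by
      rw [← hzp, hzform, hc']; ring
    have hsum_unit : IsUnit ((u:ℤ_[p]) + (p:ℤ_[p])^k * c') := by
      rw [PadicInt.isUnit_iff]
      have h2 : ‖(p:ℤ_[p])^k * c'‖ < 1 := by
        rw [PadicInt.norm_lt_one_iff_dvd]
        exact Dvd.dvd.mul_right (dvd_pow_self _ (by omega)) _
      rw [PadicInt.norm_add_eq_max_of_ne (by rw [PadicInt.norm_units]; linarith)]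
      rw [PadicInt.norm_units]
      exact max_eq_left (by linarith)
    -- p^{n+1} ∣ v - 1 ⟹ n + 1 ≤ k + 1
    have hdvd : (p:ℤ_[p])^(n+1) ∣ (p:ℤ_[p])^(k+1) := by
      have h3 : (p:ℤ_[p])^(n+1) ∣ (p:ℤ_[p])^(k+1) * ((u:ℤ_[p]) + (p:ℤ_[p])^k * c') :=
        hs ▸ ⟨b, hb⟩
      exact (IsUnit.dvd_mul_right hsum_unit).mp h3
    have hnk : n ≤ k := by
      have hp0 : (p:ℤ_[p]) ≠ 0 := Nat.cast_ne_zero.mpr hp.ne_zero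
      have := (pow_dvd_pow_iff hp0 hpnu).mp hdvd
      omega
    exact ⟨z, dvd_trans (pow_dvd_pow _ hnk) ⟨(u:ℤ_[p]), spec.trans (mul_comm _ _)⟩, hzp⟩

lemma coprime_root {N : ℕ} (hN : ¬ (p:ℕ) ∣ N) {m : ℕ} (hm : 1 ≤ m) (v : ℤ_[p])
    (hv : (p:ℤ_[p])^m ∣ v - 1) :
    ∃ y : ℤ_[p], (p:ℤ_[p])^m ∣ y - 1 ∧ y^N = v := by
  have hp := (Fact.out : p.Prime)
  have hNnorm : ‖(N:ℤ_[p])‖ = 1 := by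
    have hle := PadicInt.norm_le_one (N:ℤ_[p])
    have : ¬ ‖((N:ℤ):ℤ_[p])‖ < 1 := by
      rw [PadicInt.norm_int_lt_one_iff_dvd]
      exact_mod_cast hN
    push_cast at this
    linarith [lt_or_eq_of_le hle]
  have h1v : ‖1 - v‖ < 1 := by
    rw [show (1:ℤ_[p]) - v = -(v-1) by ring, norm_neg, PadicInt.norm_lt_one_iff_dvd]
    exact dvd_trans (dvd_pow_self _ (by omega)) hv
  set F : Polynomial ℤ_[p] := Polynomial.X ^ N - Polynomial.C v with hF
  have hFa : F.eval 1 = 1 - v := by simp [hF]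
  have hda : F.derivative.eval 1 = (N:ℤ_[p]) := by
    simp [hF, Polynomial.derivative_X_pow]
  have hlt : ‖F.eval 1‖ < ‖F.derivative.eval 1‖ ^ 2 := by
    rw [hFa, hda, hNnorm]; simpa using h1v
  obtain ⟨z, hz0, hzdist, -, -⟩ := hensels_lemma hlt
  have hzN : z ^ N = v := by
    have : z^N - v = 0 := by simpa [hF] using hz0
    exact sub_eq_zero.mp this
  have hz1 : (p:ℤ_[p]) ∣ z - 1 := by
    rw [← PadicInt.norm_lt_one_iff_dvd]
    calc ‖z - 1‖ < ‖F.derivative.eval 1‖ := hzdist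
      _ = 1 := by rw [hda, hNnorm]
  set s := ∑ i ∈ Finset.range N, z ^ i with hs
  have hgeom : s * (z - 1) = v - 1 := by rw [geom_sum_mul, hzN]
  have hsunit : IsUnit s := by
    rw [PadicInt.isUnit_iff]
    have hsN : ‖s - (N:ℤ_[p])‖ < 1 := by
      rw [PadicInt.norm_lt_one_iff_dvd]
      have : s - (N:ℤ_[p]) = ∑ i ∈ Finset.range N, (z ^ i - 1) := by
        rw [Finset.sum_sub_distrib]; simp [hs]
      rw [this]
      apply Finset.dvd_sum
      intro i _
      exact dvd_trans hz1 (by simpa using sub_dvd_pow_sub_pow z 1 i)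
    have : s = (N:ℤ_[p]) + (s - (N:ℤ_[p])) := by ring
    rw [this, PadicInt.norm_add_eq_max_of_ne (by rw [hNnorm]; linarith), hNnorm]
    exact max_eq_left (by linarith)
  refine ⟨z, ?_, hzN⟩
  have : (p:ℤ_[p])^m ∣ s * (z - 1) := hgeom ▸ hv
  exact (IsUnit.dvd_mul_left hsunit).mp this

lemma iter_root (hodd : Odd p) : ∀ j : ℕ, ∀ v : ℤ_[p], (p:ℤ_[p])^(j+1) ∣ v - 1 →
    ∃ z : ℤ_[p], (p:ℤ_[p]) ∣ z - 1 ∧ z^(p^j) = v := by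
  intro j
  induction j with
  | zero => intro v hv; exact ⟨v, by simpa using hv, by simp⟩
  | succ j ih =>
    intro v hv
    obtain ⟨w, hw1, hw2⟩ := pth_root hodd (by omega : 1 ≤ j+1) v hv
    obtain ⟨z, hz1, hz2⟩ := ih w hw1
    exact ⟨z, hz1, by rw [pow_succ, pow_mul, hz2, hw2]⟩

/-- entrywise divisibility -/
def EMat (c : ℤ_[p]) (A : Matrix (Fin 2) (Fin 2) ℤ_[p]) : Prop := ∀ i j, c ∣ A i j

lemma EMat.add {c : ℤ_[p]} {A B : Matrix (Fin 2) (Fin 2) ℤ_[p]} (hA : EMat c A)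
    (hB : EMat c B) : EMat c (A + B) := fun i j => by
  simpa using dvd_add (hA i j) (hB i j)

lemma EMat.mul {c d : ℤ_[p]} {A B : Matrix (Fin 2) (Fin 2) ℤ_[p]} (hA : EMat c A)
    (hB : EMat d B) : EMat (c*d) (A * B) := fun i j => by
  rw [Matrix.mul_apply]
  exact Finset.dvd_sum fun t _ => mul_dvd_mul (hA i t) (hB t j)

lemma EMat.mono {c d : ℤ_[p]} {A : Matrix (Fin 2) (Fin 2) ℤ_[p]} (h : d ∣ c)
    (hA : EMat c A) : EMat d A := fun i j => dvd_trans h (hA i j)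

lemma EMat.mul_left {c : ℤ_[p]} {A B : Matrix (Fin 2) (Fin 2) ℤ_[p]} (hB : EMat c B) :
    EMat c (A * B) := fun i j => by
  rw [Matrix.mul_apply]
  exact Finset.dvd_sum fun t _ => Dvd.dvd.mul_left (hB t j) _

lemma EMat.pow_sub_one {c : ℤ_[p]} {A : Matrix (Fin 2) (Fin 2) ℤ_[p]}
    (hA : EMat c (A - 1)) : ∀ i, EMat c (A ^ i - 1) := by
  intro i
  induction i with
  | zero => intro i j; simp
  | succ i ih =>
    have : A ^ (i+1) - 1 = A ^ i * (A - 1) + (A ^ i - 1) := by noncomm_ring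
    rw [this]
    exact EMat.add (EMat.mul_left hA) ih

lemma EMat.pow_p {k : ℕ} (hk : 1 ≤ k) {A : Matrix (Fin 2) (Fin 2) ℤ_[p]}
    (hA : EMat ((p:ℤ_[p])^k) (A - 1)) : EMat ((p:ℤ_[p])^(k+1)) (A ^ p - 1) := by
  have hgeom : A ^ p - 1 = (∑ i ∈ Finset.range p, A ^ i) * (A - 1) := (geom_sum_mul A p).symm
  set D := (∑ i ∈ Finset.range p, A ^ i) - (p:ℕ) • (1 : Matrix (Fin 2) (Fin 2) ℤ_[p]) with hD
  have hDE : EMat ((p:ℤ_[p])^k) D := by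
    have : D = ∑ i ∈ Finset.range p, (A ^ i - 1) := by
      rw [hD, Finset.sum_sub_distrib]
      congr 1
      simp
    rw [this]
    intro i j
    rw [Matrix.sum_apply]
    exact Finset.dvd_sum fun t _ => (EMat.pow_sub_one hA t) i j
  have hsplit : A ^ p - 1 = (p:ℕ) • (A - 1) + D * (A - 1) := by
    rw [hgeom, hD]; rw [sub_mul, smul_mul_assoc, Matrix.one_mul]
    abel
  rw [hsplit]
  apply EMat.add
  · intro i j
    simp only [Matrix.smul_apply, nsmul_eq_mul]
    rw [pow_succ']
    exact mul_dvd_mul_left _ (hA i j)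
  · exact EMat.mono (by rw [← pow_add]; exact pow_dvd_pow _ (by omega)) (EMat.mul hDE hA)

lemma EMat.pow_pow {A : Matrix (Fin 2) (Fin 2) ℤ_[p]} (hA : EMat (p:ℤ_[p]) (A - 1)) :
    ∀ j, EMat ((p:ℤ_[p])^(j+1)) (A ^ (p^j) - 1) := by
  intro j
  induction j with
  | zero => simpa using hA
  | succ j ih =>
    have : A ^ (p^(j+1)) = (A ^ (p^j)) ^ p := by rw [← pow_mul, pow_succ]
    rw [this]
    exact EMat.pow_p (by omega) ih


/-- Let `ℓ` be an odd prime and `G` a closed subgroup of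
`GL₂(ℤ_ℓ)` with `det(G) = ℤ_ℓ^×` and `ℓ ∤ |G(ℓ)|`, where `G(ℓ)` is the image
of `G` mod `ℓ`.  Then for every `n ≥ 1`, `det(G_n) = 1 + ℓⁿℤ_ℓ`, where
`G_n = {A ∈ G : A ≡ I mod ℓⁿ}`. -/
theorem stmt12 (ℓ : ℕ) [Fact (Nat.Prime ℓ)] (hodd : Odd ℓ)
    (G : Subgroup (GL (Fin 2) ℤ_[ℓ]))
    (hclosed : IsClosed (G : Set (GL (Fin 2) ℤ_[ℓ])))
    (hdet : ∀ u : ℤ_[ℓ]ˣ, ∃ g ∈ G,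
      Matrix.det ((g : GL (Fin 2) ℤ_[ℓ]) : Matrix (Fin 2) (Fin 2) ℤ_[ℓ]) = (u : ℤ_[ℓ]))
    (hord : ¬ (ℓ ∣ Nat.card (G.map (redGL ℓ 1)))) :
    ∀ n : ℕ, 1 ≤ n → ∀ u : ℤ_[ℓ],
      (∃ g ∈ G,
        (∀ i j : Fin 2, ((ℓ : ℤ_[ℓ]) ^ n) ∣
            (((g : GL (Fin 2) ℤ_[ℓ]) : Matrix (Fin 2) (Fin 2) ℤ_[ℓ]) - 1) i j) ∧
        Matrix.det ((g : GL (Fin 2) ℤ_[ℓ]) : Matrix (Fin 2) (Fin 2) ℤ_[ℓ]) = u)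
      ↔ ∃ a : ℤ_[ℓ], u = 1 + (ℓ : ℤ_[ℓ]) ^ n * a := by
  intro n hn u
  constructor
  · -- forward: determinant of a matrix ≡ 1 mod ℓⁿ is ≡ 1 mod ℓⁿ
    rintro ⟨g, -, hcong, hdetg⟩
    set A := ((g : GL (Fin 2) ℤ_[ℓ]) : Matrix (Fin 2) (Fin 2) ℤ_[ℓ]) with hA
    have e00 : (ℓ:ℤ_[ℓ])^n ∣ A 0 0 - 1 := by simpa [Matrix.sub_apply] using hcong 0 0
    have e11 : (ℓ:ℤ_[ℓ])^n ∣ A 1 1 - 1 := by simpa [Matrix.sub_apply] using hcong 1 1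
    have e01 : (ℓ:ℤ_[ℓ])^n ∣ A 0 1 := by
      simpa [Matrix.sub_apply, Matrix.one_apply] using hcong 0 1
    have e10 : (ℓ:ℤ_[ℓ])^n ∣ A 1 0 := by
      simpa [Matrix.sub_apply, Matrix.one_apply] using hcong 1 0
    have hdvd : (ℓ:ℤ_[ℓ])^n ∣ A.det - 1 := by
      rw [Matrix.det_fin_two]
      have : A 0 0 * A 1 1 - A 0 1 * A 1 0 - 1
          = (A 0 0 - 1) * A 1 1 + (A 1 1 - 1) - A 0 1 * A 1 0 := by ring
      rw [this]
      exact dvd_sub (dvd_add (e00.mul_right _) e11) (e01.mul_right _)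
    obtain ⟨a, ha⟩ := hdvd
    exact ⟨a, by rw [← hdetg]; linear_combination ha⟩
  · -- backward
    rintro ⟨a, rfl⟩
    have hp := (Fact.out : ℓ.Prime)
    set N := Nat.card (G.map (redGL ℓ 1)) with hN
    haveI : NeZero (ℓ ^ 1) := ⟨pow_ne_zero 1 hp.ne_zero⟩
    -- roots
    have hdvd : (ℓ:ℤ_[ℓ])^n ∣ (1 + (ℓ:ℤ_[ℓ])^n * a) - 1 := ⟨a, by ring⟩
    obtain ⟨y, hy1, hy2⟩ := coprime_root hord hn _ hdvd
    obtain ⟨z, hz1, hz2⟩ := iter_root hodd (n-1) y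
      (by rwa [Nat.sub_add_cancel hn])
    have hzu : IsUnit z := punit_of_one_dvd z hz1
    obtain ⟨g, hgG, hgdet⟩ := hdet hzu.unit
    rw [IsUnit.unit_spec] at hgdet
    -- Lagrange: (g^N) reduces to 1 mod ℓ
    have hmem : redGL ℓ 1 g ∈ G.map (redGL ℓ 1) := ⟨g, hgG, rfl⟩
    have hlag : redGL ℓ 1 (g ^ N) = 1 := by
      have h1 : (⟨redGL ℓ 1 g, hmem⟩ : G.map (redGL ℓ 1)) ^ N = 1 := pow_card_eq_one'
      have h2 := congrArg (Subtype.val) h1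
      simpa [map_pow] using h2
    set M := ((((g^N) : GL (Fin 2) ℤ_[ℓ])) : Matrix (Fin 2) (Fin 2) ℤ_[ℓ]) with hM
    have hcong1 : EMat (ℓ:ℤ_[ℓ]) (M - 1) := by
      intro i j
      have hval := congrArg Units.val hlag
      have hmap : (PadicInt.toZModPow 1).mapMatrix M = 1 := hval
      have hent : PadicInt.toZModPow 1 (M i j) = (1 : Matrix (Fin 2) (Fin 2) (ZMod (ℓ^1))) i j := by
        have := congrFun (congrFun (congrArg (fun X => (X : Matrix (Fin 2) (Fin 2) (ZMod (ℓ^1)))) hmap) i) j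
        simpa [RingHom.mapMatrix_apply, Matrix.map_apply] using this
      have hker : PadicInt.toZModPow 1 ((M - 1) i j) = 0 := by
        rw [Matrix.sub_apply, map_sub, hent]
        by_cases hij : i = j
        · subst hij; simp [Matrix.one_apply]
        · simp [Matrix.one_apply, hij]
      have : (M - 1) i j ∈ RingHom.ker (PadicInt.toZModPow (p := ℓ) 1) := hker
      rw [PadicInt.ker_toZModPow, Ideal.mem_span_singleton, pow_one] at this
      exact this
    -- the element
    refine ⟨(g ^ N) ^ (ℓ ^ (n-1)), G.pow_mem (G.pow_mem hgG N) _, ?_, ?_⟩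
    · intro i j
      have hEM := EMat.pow_pow hcong1 (n-1)
      rw [Nat.sub_add_cancel hn] at hEM
      have hval : (((((g^N) ^ (ℓ^(n-1))) : GL (Fin 2) ℤ_[ℓ])) : Matrix (Fin 2) (Fin 2) ℤ_[ℓ])
          = M ^ (ℓ^(n-1)) := by rw [hM, Units.val_pow_eq_pow_val]
      rw [hval]
      exact hEM i j
    · have hval : (((((g^N) ^ (ℓ^(n-1))) : GL (Fin 2) ℤ_[ℓ])) : Matrix (Fin 2) (Fin 2) ℤ_[ℓ])
          = ((g : GL (Fin 2) ℤ_[ℓ]) : Matrix (Fin 2) (Fin 2) ℤ_[ℓ]) ^ (N * ℓ^(n-1)) := by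
        rw [Units.val_pow_eq_pow_val, Units.val_pow_eq_pow_val, ← pow_mul]
      rw [hval, Matrix.det_pow, hgdet]
      rw [mul_comm N, pow_mul, hz2, hy2]
end
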